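/- arXiv:1607.05894 — 4 statements merged into one kernel-verified Lean document; each statement's English description precedes it below -/
import Mathlib

section
/- Let ℓ ≥ 2 and d ≥ 3 be integers and set b = ⌊(d-2)/ℓ⌋. Then C((b+1)ℓ+1, d-1) + C((b+2)ℓ, d-1) ≥ C(ℓ+d-1, d-1) + d·C((b+1)ℓ, d-1), where C(n,m) denotes the binomial coefficient. -/
/-!
Write `k + 1 = d - 1` and `(b + 1)ℓ = k + 1 + r`; the choice of `b` gives `r < ℓ`.
Applying Pascal's rule `r` times, `C(k+1+r+ℓ, k+1) ≥ C(k+1+ℓ, k+1) + r·C(k+1+ℓ, k)`.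
It remains to absorb `(k+2)·C(k+1+r, k+1)` into `C(k+2+r, k+1) + r·C(k+1+ℓ, k)`: after
multiplying by `r + 1` this is `(k+1)·C(k+1+r, k+1) = (r+1)·C(k+1+r, k) ≤ (r+1)·C(k+1+ℓ, k)`.
-/

namespace Nat

theorem choose_succ_add_mul_choose_le (n k r : ℕ) :
    choose n (k + 1) + r * choose n k ≤ choose (n + r) (k + 1) := by
  induction r with
  | zero => simp
  | succ r ih =>
    have hmono : choose n k ≤ choose (n + r) k := choose_le_choose k (le_add_right n r)
    rw [← add_assoc, choose_succ_succ', succ_mul]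
    omega

theorem succ_mul_choose_le_mul_choose {k r l : ℕ} (hrl : r ≤ l) :
    (k + 1) * choose (k + 1 + r) (k + 1) ≤ (r + 1) * choose (k + 1 + l) k := by
  have hsucc : choose (k + 1 + r) (k + 1) * (k + 1) = choose (k + 1 + r) k * (r + 1) := by
    rw [choose_succ_right_eq]
    congr 2
    omega
  calc (k + 1) * choose (k + 1 + r) (k + 1)
      = (r + 1) * choose (k + 1 + r) k := by linarith
    _ ≤ (r + 1) * choose (k + 1 + l) k := by gcongr

theorem add_two_mul_choose_le {k r l : ℕ} (hrl : r ≤ l) :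
    (k + 2) * choose (k + 1 + r) (k + 1) ≤
      choose (k + 1 + r + 1) (k + 1) + r * choose (k + 1 + l) k := by
  have hstep : choose (k + 1 + r) (k + 1) * (k + 1 + r + 1) =
      choose (k + 1 + r + 1) (k + 1) * (r + 1) := by
    rw [choose_mul_succ_eq]
    congr 2
    omega
  have hbound := succ_mul_choose_le_mul_choose (k := k) hrl
  refine le_of_mul_le_mul_left ?_ (succ_pos r)
  nlinarith

theorem choose_add_add_two_mul_choose_le {k r l : ℕ} (hrl : r ≤ l) :
    choose (l + k + 1) (k + 1) + (k + 2) * choose (k + 1 + r) (k + 1) ≤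
      choose (k + 1 + r + 1) (k + 1) + choose (k + 1 + r + l) (k + 1) := by
  have hpascal := choose_succ_add_mul_choose_le (k + 1 + l) k r
  have habsorb := add_two_mul_choose_le (k := k) hrl
  rw [show k + 1 + l + r = k + 1 + r + l by omega] at hpascal
  rw [show l + k + 1 = k + 1 + l by omega]
  omega

theorem exists_lt_succ_div_mul_eq (m l : ℕ) (hl : 0 < l) :
    ∃ r < l, (m / l + 1) * l = m + 1 + r := by
  have hdiv := div_add_mod m l
  have hmod := mod_lt m hl
  refine ⟨l - 1 - m % l, by omega, ?_⟩
  rw [succ_mul, mul_comm]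
  omega

end Nat

/-- For integers `ℓ ≥ 2`, `d ≥ 3` and `b = ⌊(d-2)/ℓ⌋`, one has
`C((b+1)ℓ+1, d-1) + C((b+2)ℓ, d-1) ≥ C(ℓ+d-1, d-1) + d·C((b+1)ℓ, d-1)`. -/
theorem stmt0 (ℓ d b : ℕ) (hl : 2 ≤ ℓ) (hd : 3 ≤ d) (hb : b = (d - 2) / ℓ) :
    Nat.choose (ℓ + d - 1) (d - 1) + d * Nat.choose ((b + 1) * ℓ) (d - 1) ≤
      Nat.choose ((b + 1) * ℓ + 1) (d - 1) + Nat.choose ((b + 2) * ℓ) (d - 1) := by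
  obtain ⟨k, rfl⟩ : ∃ k, d = k + 2 := ⟨d - 2, by omega⟩
  rw [Nat.add_sub_cancel] at hb
  subst hb
  obtain ⟨r, hr, hN⟩ := Nat.exists_lt_succ_div_mul_eq k ℓ (by omega)
  have hN' : (k / ℓ + 2) * ℓ = k + 1 + r + ℓ := by rw [Nat.succ_mul, hN]
  rw [show ℓ + (k + 2) - 1 = ℓ + k + 1 by omega, show k + 2 - 1 = k + 1 by omega, hN', hN]
  exact Nat.choose_add_add_two_mul_choose_le hr.le
end

section
/- Let ℓ ≥ 2 and d ≥ 3 be integers and set b = ⌊(d-2)/ℓ⌋. Then equality C((b+1)ℓ+1, d-1) + C((b+2)ℓ, d-1) = C(ℓ+d-1, d-1) + d·C((b+1)ℓ, d-1) holds if and only if ℓ divides d-1. -/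
/-!
Put `m = d - 1` and `n = (b + 1)ℓ`, the least multiple of `ℓ` that is at least `m`; thus
`m ≤ n < m + ℓ`, with `n = m` exactly when `ℓ ∣ m`. For `n = m` both sides equal
`C(ℓ + m, m) + m + 1`. For `n > m`, Pascal's rule and `m C(n, m) = (n - m + 1) C(n, m - 1)` turn
the right-hand side minus the left-hand side into `(n - m) C(n, m - 1) - (C(n + ℓ, m) - C(m + ℓ, m))`,
and the difference `C(n + ℓ, m) - C(m + ℓ, m)` is a sum of `n - m` terms `C(j, m - 1)` with
`j ≥ m + ℓ > n`, each strictly larger than `C(n, m - 1)` because `m ≥ 2`.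
-/

namespace Nat

theorem choose_add_mul_choose_le_choose_add (a s : ℕ) :
    ∀ t : ℕ, a.choose (s + 1) + t * a.choose s ≤ (a + t).choose (s + 1)
  | 0 => by simp
  | t + 1 => by
    have ih := choose_add_mul_choose_le_choose_add a s t
    have hmono : a.choose s ≤ (a + t).choose s := choose_le_choose s (le_add_right a t)
    rw [← add_assoc, choose_succ_succ', add_mul, one_mul]
    omega

theorem choose_lt_choose_of_lt {n m k : ℕ} (hk : k < n) (hnm : n < m) :
    n.choose (k + 1) < m.choose (k + 1) :=
  calc n.choose (k + 1) < n.choose k + n.choose (k + 1) :=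
        Nat.lt_add_of_pos_left (choose_pos hk.le)
    _ = (n + 1).choose (k + 1) := (choose_succ_succ' n k).symm
    _ ≤ m.choose (k + 1) := choose_le_choose _ hnm

theorem dvd_add_one_iff_div_add_one_mul_eq {a ℓ : ℕ} :
    ℓ ∣ a + 1 ↔ (a / ℓ + 1) * ℓ = a + 1 := by
  constructor
  · intro h
    rw [← succ_div_of_dvd h]
    exact Nat.div_mul_cancel h
  · intro h
    exact h ▸ Dvd.intro_left _ rfl

theorem choose_add_succ_mul_choose_lt {ℓ n s : ℕ} (hs : 1 ≤ s) (hsn : s + 1 < n)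
    (hnℓ : n < ℓ + s + 1) :
    (ℓ + s + 1).choose (s + 1) + (s + 2) * n.choose (s + 1) <
      (n + 1).choose (s + 1) + (n + ℓ).choose (s + 1) := by
  obtain ⟨t, rfl⟩ : ∃ t, n = s + 2 + t := ⟨n - (s + 2), by omega⟩
  have hratio : (s + 1) * (s + 2 + t).choose (s + 1) = (t + 2) * (s + 2 + t).choose s := by
    rw [mul_comm, choose_succ_right_eq, mul_comm]
    congr 1
    omega
  have htelescope := choose_add_mul_choose_le_choose_add (ℓ + s + 1) s (t + 1)
  rw [show ℓ + s + 1 + (t + 1) = s + 2 + t + ℓ by omega] at htelescope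
  have hlt : (t + 1) * (s + 2 + t).choose s < (t + 1) * (ℓ + s + 1).choose s := by
    obtain ⟨k, rfl⟩ : ∃ k, s = k + 1 := ⟨s - 1, by omega⟩
    exact Nat.mul_lt_mul_of_pos_left (choose_lt_choose_of_lt (by omega) hnℓ) (by omega)
  rw [choose_succ_succ' (s + 2 + t) s]
  linarith

end Nat

/-- For integers `ℓ ≥ 2`, `d ≥ 3` and `b = ⌊(d-2)/ℓ⌋`, equality
`C((b+1)ℓ+1, d-1) + C((b+2)ℓ, d-1) = C(ℓ+d-1, d-1) + d·C((b+1)ℓ, d-1)` holds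
if and only if `ℓ ∣ d-1`. -/
theorem stmt1 (ℓ d b : ℕ) (hl : 2 ≤ ℓ) (hd : 3 ≤ d) (hb : b = (d - 2) / ℓ) :
    (Nat.choose ((b + 1) * ℓ + 1) (d - 1) + Nat.choose ((b + 2) * ℓ) (d - 1) =
      Nat.choose (ℓ + d - 1) (d - 1) + d * Nat.choose ((b + 1) * ℓ) (d - 1)) ↔
      ℓ ∣ (d - 1) := by
  obtain ⟨s, rfl⟩ : ∃ s, d = s + 2 := ⟨d - 2, by omega⟩
  simp only [Nat.add_sub_cancel] at hb
  have hℓ : 0 < ℓ := by omega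
  have hround : s < (b + 1) * ℓ ∧ (b + 1) * ℓ ≤ s + ℓ := by
    rw [hb, add_mul, one_mul]
    exact ⟨Nat.lt_div_mul_add hℓ, Nat.add_le_add_right (Nat.div_mul_le_self s ℓ) ℓ⟩
  rw [show s + 2 - 1 = s + 1 from rfl, show ℓ + (s + 2) - 1 = ℓ + s + 1 by omega,
    show (b + 2) * ℓ = (b + 1) * ℓ + ℓ by ring, Nat.dvd_add_one_iff_div_add_one_mul_eq, ← hb]
  constructor
  · intro heq
    by_contra hne
    exact (Nat.choose_add_succ_mul_choose_lt (by omega) (by omega) (by omega)).ne' heq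
  · intro hn
    rw [hn, Nat.choose_succ_self_right, Nat.choose_self, show s + 1 + ℓ = ℓ + s + 1 by ring]
    ring
end

section
/- Let A = k[[s^r, s^{r-1}t, …, st^{r-1}, t^r]] be the r-th Veronese subring of the power series ring k[[s,t]] (r ≥ 2), with maximal ideal 𝔪 generated by s^{r-i}t^i, 0 ≤ i ≤ r. Set K = (s^{r-1}t, …, st^{r-1}), x = st^{r-1}, y = s^r, z = t^r. Then 𝔪K = yK + x𝔪 and 𝔪² = (y,z)𝔪. -/
open MvPowerSeries

/-!
The generators `f i = s^(r-i) t^i` of `𝔪` satisfy `f i * f j = f p * f q` whenever `i + j = p + q`.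
So a product of two generators `f i * f j` of `𝔪K` is `y * f (i + j)` with `f (i + j) ∈ K` when
`i + j ≤ r - 1`, and `f (i + j + 1 - r) * x` otherwise; likewise a product of two generators of
`𝔪²` is `y * f (i + j)` when `i + j ≤ r`, and `z * f (i + j - r)` otherwise.
-/

def MulDependsOnSum {M : Type*} [Mul M] (f : ℕ → M) (r : ℕ) : Prop :=
  ∀ i j p q, i ≤ r → j ≤ r → p ≤ r → q ≤ r → i + j = p + q → f i * f j = f p * f q

theorem mulDependsOnSum_pow_mul_pow {M : Type*} [CommMonoid M] (s t : M) (r : ℕ) :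
    MulDependsOnSum (fun i ↦ s ^ (r - i) * t ^ i) r := by
  intro i j p q hi hj hp hq h
  rw [mul_mul_mul_comm, mul_mul_mul_comm (s ^ (r - p)), ← pow_add, ← pow_add, ← pow_add,
    ← pow_add, show r - i + (r - j) = r - p + (r - q) by omega, h]

namespace MulDependsOnSum

variable {k R : Type*} [CommSemiring k] [CommSemiring R] [Algebra k R] {A : Subalgebra k R}
  {f : ℕ → R} {r : ℕ}

theorem subalgebra_mul_eq_mul (hf : MulDependsOnSum f r) {a b c d : A} {i j p q : ℕ}
    (ha : (a : R) = f i) (hb : (b : R) = f j) (hc : (c : R) = f p) (hd : (d : R) = f q)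
    (hi : i ≤ r) (hj : j ≤ r) (hp : p ≤ r) (hq : q ≤ r) (h : i + j = p + q) :
    a * b = c * d :=
  Subtype.ext <| by
    rw [Subalgebra.coe_mul, Subalgebra.coe_mul, ha, hb, hc, hd, hf i j p q hi hj hp hq h]

theorem mul_eq_span_mul_sup_mul_span (hf : MulDependsOnSum f r) (hA : ∀ i ≤ r, f i ∈ A) (hr : 2 ≤ r)
    {𝔪 K : Ideal A} (h𝔪 : 𝔪 = Ideal.span {a : A | ∃ i : ℕ, i ≤ r ∧ (a : R) = f i})
    (hK : K = Ideal.span {a : A | ∃ i : ℕ, 1 ≤ i ∧ i ≤ r - 1 ∧ (a : R) = f i})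
    {x y : A} (hx : (x : R) = f (r - 1)) (hy : (y : R) = f 0) :
    𝔪 * K = Ideal.span {y} * K ⊔ 𝔪 * Ideal.span {x} := by
  have hxK : x ∈ K := hK ▸ Ideal.subset_span ⟨r - 1, by omega, le_rfl, hx⟩
  have hy𝔪 : y ∈ 𝔪 := h𝔪 ▸ Ideal.subset_span ⟨0, by omega, hy⟩
  refine le_antisymm ?_ <|
    sup_le (Ideal.mul_mono_left (Ideal.span_singleton_le_iff_mem _ |>.2 hy𝔪))
      (Ideal.mul_mono_right (Ideal.span_singleton_le_iff_mem _ |>.2 hxK))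
  subst h𝔪 hK
  rw [Ideal.span_mul_span', Ideal.span_le, Set.mul_subset_iff]
  rintro a ⟨i, hi, ha⟩ b ⟨j, hj₁, hj₂, hb⟩
  rcases le_or_gt (i + j) (r - 1) with hij | hij
  · let c : A := ⟨f (i + j), hA _ (by omega)⟩
    rw [hf.subalgebra_mul_eq_mul ha hb hy (d := c) rfl hi (by omega) (by omega) (by omega)
      (by omega)]
    exact Ideal.mem_sup_left <| Ideal.mul_mem_mul (Ideal.mem_span_singleton_self y)
      (Ideal.subset_span ⟨i + j, by omega, hij, rfl⟩)
  · let c : A := ⟨f (i + j + 1 - r), hA _ (by omega)⟩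
    rw [hf.subalgebra_mul_eq_mul ha hb (c := c) rfl hx hi (by omega) (by omega) (by omega)
      (by omega)]
    exact Ideal.mem_sup_right <| Ideal.mul_mem_mul
      (Ideal.subset_span ⟨i + j + 1 - r, by omega, rfl⟩) (Ideal.mem_span_singleton_self x)

theorem sq_eq_span_pair_mul (hf : MulDependsOnSum f r) (hA : ∀ i ≤ r, f i ∈ A)
    {𝔪 : Ideal A} (h𝔪 : 𝔪 = Ideal.span {a : A | ∃ i : ℕ, i ≤ r ∧ (a : R) = f i})
    {y z : A} (hy : (y : R) = f 0) (hz : (z : R) = f r) :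
    𝔪 ^ 2 = Ideal.span {y, z} * 𝔪 := by
  have hy𝔪 : y ∈ 𝔪 := h𝔪 ▸ Ideal.subset_span ⟨0, by omega, hy⟩
  have hz𝔪 : z ∈ 𝔪 := h𝔪 ▸ Ideal.subset_span ⟨r, le_rfl, hz⟩
  rw [pow_two]
  refine le_antisymm ?_ <| Ideal.mul_mono_left <| Ideal.span_le.2 <|
    Set.insert_subset hy𝔪 (Set.singleton_subset_iff.2 hz𝔪)
  subst h𝔪
  rw [Ideal.span_mul_span', Ideal.span_le, Set.mul_subset_iff]
  rintro a ⟨i, hi, ha⟩ b ⟨j, hj, hb⟩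
  rcases le_or_gt (i + j) r with hij | hij
  · let c : A := ⟨f (i + j), hA _ hij⟩
    rw [hf.subalgebra_mul_eq_mul ha hb hy (d := c) rfl hi hj (by omega) hij (by omega)]
    exact Ideal.mul_mem_mul (Ideal.subset_span (Set.mem_insert y {z}))
      (Ideal.subset_span ⟨i + j, hij, rfl⟩)
  · let c : A := ⟨f (i + j - r), hA _ (by omega)⟩
    rw [hf.subalgebra_mul_eq_mul ha hb hz (d := c) rfl hi hj le_rfl (by omega) (by omega)]
    exact Ideal.mul_mem_mul (Ideal.subset_span (Set.mem_insert_of_mem y rfl))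
      (Ideal.subset_span ⟨i + j - r, by omega, rfl⟩)

end MulDependsOnSum

/-- Let `A ⊆ k[[s,t]]` be the `r`-th Veronese subring, generated
by the monomials `s^{r-i}t^i` (`0 ≤ i ≤ r`), `𝔪` its maximal ideal (generated by
those monomials), `K = (s^{r-1}t, …, st^{r-1})`, `x = st^{r-1}`, `y = s^r`,
`z = t^r`. Then `𝔪K = yK + x𝔪` and `𝔪² = (y,z)𝔪`. -/
theorem stmt12 (k : Type*) [Field k] (r : ℕ) (hr : 2 ≤ r)
    (A : Subalgebra k (MvPowerSeries (Fin 2) k))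
    (hA : A = Algebra.adjoin k
      {f : MvPowerSeries (Fin 2) k | ∃ i : ℕ, i ≤ r ∧ f = X 0 ^ (r - i) * X 1 ^ i})
    (𝔪 K : Ideal ↥A)
    (h𝔪 : 𝔪 = Ideal.span {a : ↥A | ∃ i : ℕ, i ≤ r ∧ (a : MvPowerSeries (Fin 2) k) =
      X 0 ^ (r - i) * X 1 ^ i})
    (hK : K = Ideal.span {a : ↥A | ∃ i : ℕ, 1 ≤ i ∧ i ≤ r - 1 ∧
      (a : MvPowerSeries (Fin 2) k) = X 0 ^ (r - i) * X 1 ^ i})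
    (x y z : ↥A)
    (hx : (x : MvPowerSeries (Fin 2) k) = X 0 * X 1 ^ (r - 1))
    (hy : (y : MvPowerSeries (Fin 2) k) = X 0 ^ r)
    (hz : (z : MvPowerSeries (Fin 2) k) = X 1 ^ r) :
    𝔪 * K = Ideal.span {y} * K ⊔ 𝔪 * Ideal.span {x} ∧
      𝔪 ^ 2 = Ideal.span {y, z} * 𝔪 := by
  have hf := mulDependsOnSum_pow_mul_pow (X 0 : MvPowerSeries (Fin 2) k) (X 1) r
  have hmem : ∀ i ≤ r, (X 0 ^ (r - i) * X 1 ^ i : MvPowerSeries (Fin 2) k) ∈ A :=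
    fun i hi ↦ hA ▸ Algebra.subset_adjoin ⟨i, hi, rfl⟩
  have hx' : (x : MvPowerSeries (Fin 2) k) = X 0 ^ (r - (r - 1)) * X 1 ^ (r - 1) := by
    rw [hx, Nat.sub_sub_self (by omega), pow_one]
  have hy' : (y : MvPowerSeries (Fin 2) k) = X 0 ^ (r - 0) * X 1 ^ 0 := by simp [hy]
  have hz' : (z : MvPowerSeries (Fin 2) k) = X 0 ^ (r - r) * X 1 ^ r := by simp [hz]
  exact ⟨hf.mul_eq_span_mul_sup_mul_span hmem hr h𝔪 hK hx' hy', hf.sq_eq_span_pair_mul hmem h𝔪 hy' hz'⟩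
end

section
/- Let ℓ ≥ 2 and d ≥ 3 be integers with ℓ ∤ (d-1), and set b = ⌊(d-2)/ℓ⌋. Then the strict inequality C((b+1)ℓ+1, d-1) + C((b+2)ℓ, d-1) > C(ℓ+d-1, d-1) + d·C((b+1)ℓ, d-1) holds. -/
/-!
Write `d - 2 = b ℓ + q` with `q < ℓ`; since `ℓ ∤ d - 1`, even `q + 2 ≤ ℓ`. Put `j = d - 2`,
`N = (b + 1) ℓ` and `u = ℓ - q ≥ 2`, so `N = j + u`. Iterating Pascal's rule gives
`C(N + q + u, j + 1) ≥ C(N + q + 1, j + 1) + (u - 1) C(N + q + 1, j)`, and absorption gives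
`(j + 1) C(N, j + 1) = u C(N, j)`. Together with `C(N + 1, j + 1) = C(N, j) + C(N, j + 1)` this
reduces the claim to `(u - 1) C(N, j) < (u - 1) C(N + q + 1, j)`, true as `u ≥ 2` and `1 ≤ j ≤ N`.
-/

namespace Nat

lemma choose_add_mul_choose_le_choose_add_s18 (m j s : ℕ) :
    choose m (j + 1) + s * choose m j ≤ choose (m + s) (j + 1) := by
  induction s with
  | zero => simp
  | succ s ih =>
    have hmono : choose m j ≤ choose (m + s) j := choose_le_add m s j
    have hpascal : choose (m + (s + 1)) (j + 1) = choose (m + s) j + choose (m + s) (j + 1) :=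
      choose_succ_succ (m + s) j
    rw [hpascal, succ_mul]
    omega

lemma choose_lt_choose_succ {n k : ℕ} (hk : 1 ≤ k) (hkn : k ≤ n) :
    choose n k < choose (n + 1) k := by
  obtain ⟨i, rfl⟩ : ∃ i, k = i + 1 := ⟨k - 1, by omega⟩
  have hpos : 0 < choose n i := choose_pos (by omega)
  rw [choose_succ_succ']
  omega

lemma choose_lt_choose_of_lt_s18 {m n k : ℕ} (hk : 1 ≤ k) (hkm : k ≤ m) (hmn : m < n) :
    choose m k < choose n k :=
  (choose_lt_choose_succ hk hkm).trans_le (choose_le_choose k hmn)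

lemma choose_add_add_mul_choose_lt {N j t u : ℕ} (hj : 1 ≤ j) (hu : 2 ≤ u) (hN : N = j + u) :
    choose (N + t + 1) (j + 1) + (j + 2) * choose N (j + 1) <
      choose (N + 1) (j + 1) + choose (N + t + u) (j + 1) := by
  obtain ⟨v, rfl⟩ : ∃ v, u = v + 1 := ⟨u - 1, by omega⟩
  have hchain := choose_add_mul_choose_le_choose_add_s18 (N + t + 1) j v
  rw [show N + t + 1 + v = N + t + (v + 1) by ring] at hchain
  have hpascal : choose (N + 1) (j + 1) = choose N j + choose N (j + 1) := choose_succ_succ N j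
  have habsorb : choose N (j + 1) * (j + 1) = choose N j * (v + 1) := by
    rw [choose_succ_right_eq, hN, Nat.add_sub_cancel_left]
  have hlt : v * choose N j < v * choose (N + t + 1) j :=
    Nat.mul_lt_mul_of_pos_left (choose_lt_choose_of_lt_s18 hj (by omega) (by omega)) (by omega)
  linarith

lemma mod_add_two_le_of_not_dvd {n ℓ : ℕ} (hℓ : 0 < ℓ) (h : ¬ ℓ ∣ n + 1) : n % ℓ + 2 ≤ ℓ := by
  have hlt : n % ℓ < ℓ := mod_lt n hℓ
  have hne : n % ℓ + 1 ≠ ℓ := fun heq => h ⟨n / ℓ + 1, by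
    have := div_add_mod n ℓ
    rw [mul_add, mul_one]
    omega⟩
  omega

end Nat

/-- For integers `ℓ ≥ 2`, `d ≥ 3` with `ℓ ∤ (d-1)` and `b = ⌊(d-2)/ℓ⌋`,
the strict inequality
`C((b+1)ℓ+1, d-1) + C((b+2)ℓ, d-1) > C(ℓ+d-1, d-1) + d·C((b+1)ℓ, d-1)` holds. -/
theorem stmt18 (ℓ d b : ℕ) (hl : 2 ≤ ℓ) (hd : 3 ≤ d) (hndvd : ¬ ℓ ∣ (d - 1))
    (hb : b = (d - 2) / ℓ) :
    Nat.choose (ℓ + d - 1) (d - 1) + d * Nat.choose ((b + 1) * ℓ) (d - 1) <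
      Nat.choose ((b + 1) * ℓ + 1) (d - 1) + Nat.choose ((b + 2) * ℓ) (d - 1) := by
  set j := d - 2
  set q := j % ℓ
  have hq : q + 2 ≤ ℓ :=
    Nat.mod_add_two_le_of_not_dvd (by omega) (by rwa [show j + 1 = d - 1 by omega])
  have hdecomp : b * ℓ + q = j := by rw [hb, mul_comm]; exact Nat.div_add_mod j ℓ
  have hN : (b + 1) * ℓ = b * ℓ + ℓ := by ring
  have hN' : (b + 2) * ℓ = b * ℓ + ℓ + ℓ := by ring
  have hkey := Nat.choose_add_add_mul_choose_lt (t := q) (u := ℓ - q) (by omega) (by omega)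
    (show (b + 1) * ℓ = j + (ℓ - q) by omega)
  rwa [show (b + 1) * ℓ + q + 1 = ℓ + d - 1 by omega, show j + 1 = d - 1 by omega,
    show j + 2 = d by omega, show (b + 1) * ℓ + q + (ℓ - q) = (b + 2) * ℓ by omega]
    at hkey
end
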